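/- Let Q(x | z) = Γ(1/2)^{-k(k+1)} ∏_{a ≤ b} Γ(o_{ab} + 1/2) Γ(n_{ab} - o_{ab} + 1/2) / Γ(n_{ab} + 1) be the Beta(1/2,1/2)-integrated conditional SBM likelihood. Then for every graph x on n ≥ 2 vertices and every z ∈ [k]^n, log( sup_P P(x|z) / Q(x|z) ) ≤ (k(k+1)/2) log n + c_k for a constant c_k depending only on k. -/
import Mathlib


open Finset

/-- Number of potential edges between communities `ab.1` and `ab.2` under assignment `z`. -/
def nabSBM (n k : ℕ) (z : Fin n → Fin k) (ab : Fin k × Fin k) : ℕ :=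
  (Finset.univ.filter (fun p : {p : Fin n × Fin n // p.1 < p.2} =>
    min (z p.1.1) (z p.1.2) = ab.1 ∧ max (z p.1.1) (z p.1.2) = ab.2)).card

/-- Number of edges of the graph `x` between communities `ab.1` and `ab.2`. -/
def oabSBM (n k : ℕ) (z : Fin n → Fin k) (x : {p : Fin n × Fin n // p.1 < p.2} → Bool)
    (ab : Fin k × Fin k) : ℕ :=
  (Finset.univ.filter (fun p : {p : Fin n × Fin n // p.1 < p.2} =>
    (min (z p.1.1) (z p.1.2) = ab.1 ∧ max (z p.1.1) (z p.1.2) = ab.2) ∧ x p = true)).card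

/-- Maximized conditional SBM likelihood `sup_P P(x|z)` over symmetric `P ∈ [0,1]^{k×k}`. -/
noncomputable def supLikSBM (n k : ℕ) (z : Fin n → Fin k)
    (x : {p : Fin n × Fin n // p.1 < p.2} → Bool) : ℝ :=
  ⨆ P : {P : Fin k → Fin k → ℝ //
      (∀ a b, P a b ∈ Set.Icc (0 : ℝ) 1) ∧ (∀ a b, P a b = P b a)},
    ∏ ab ∈ Finset.univ.filter (fun ab : Fin k × Fin k => ab.1 ≤ ab.2),
      (P.1 ab.1 ab.2) ^ (oabSBM n k z x ab) *
        (1 - P.1 ab.1 ab.2) ^ (nabSBM n k z ab - oabSBM n k z x ab)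

/-- The `Beta(1/2,1/2)`-integrated conditional SBM likelihood
`Q(x|z) = Γ(1/2)^{-k(k+1)} ∏_{a ≤ b} Γ(o_{ab}+1/2) Γ(n_{ab}-o_{ab}+1/2) / Γ(n_{ab}+1)`. -/
noncomputable def QSBM (n k : ℕ) (z : Fin n → Fin k)
    (x : {p : Fin n × Fin n // p.1 < p.2} → Bool) : ℝ :=
  (∏ ab ∈ Finset.univ.filter (fun ab : Fin k × Fin k => ab.1 ≤ ab.2),
    Real.Gamma ((oabSBM n k z x ab : ℝ) + 1/2) *
      Real.Gamma ((nabSBM n k z ab : ℝ) - (oabSBM n k z x ab : ℝ) + 1/2) /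
        Real.Gamma ((nabSBM n k z ab : ℝ) + 1)) / Real.Gamma (1/2) ^ (k * (k + 1))


section SBMProofAux
open Real

lemma myGamma_nat_add_half (o : ℕ) :
    Real.Gamma ((o : ℝ) + 1/2) = Real.sqrt π * (2*o).factorial / (4^o * o.factorial) := by
  induction o with
  | zero => rw [show ((0:ℕ):ℝ) + 1/2 = 1/2 by norm_num, Real.Gamma_one_half_eq]; simp
  | succ o ih =>
    have h1 : ((o+1 : ℕ) : ℝ) + 1/2 = ((o:ℝ) + 1/2) + 1 := by push_cast; ring
    rw [h1, Real.Gamma_add_one (by positivity), ih]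
    have h2 : (2*(o+1)) = (2*o+1)+1 := by ring
    rw [h2]
    have e1 : ((2*o+1+1).factorial : ℝ) = (2*o+1+1) * ((2*o+1) * (2*o).factorial) := by
      rw [Nat.factorial_succ, Nat.factorial_succ]; push_cast; ring
    have e2 : ((o+1).factorial : ℝ) = (o+1) * o.factorial := by
      rw [Nat.factorial_succ]; push_cast; ring
    rw [e1, e2]
    have ho : (0:ℝ) < o.factorial := by positivity
    field_simp
    ring

lemma stirling_le (n : ℕ) (hn : 1 ≤ n) : Stirling.stirlingSeq n ≤ Real.exp 1 / Real.sqrt 2 := by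
  obtain ⟨m, rfl⟩ := Nat.exists_eq_add_of_le' hn
  have := Stirling.stirlingSeq'_antitone (Nat.zero_le m)
  simpa using this

lemma le_stirling (n : ℕ) : Real.sqrt π ≤ Stirling.stirlingSeq (n+1) := by
  have h : Filter.Tendsto (fun m => Stirling.stirlingSeq (m+1)) Filter.atTop (nhds (Real.sqrt π)) :=
    (Filter.tendsto_add_atTop_iff_nat 1).mpr Stirling.tendsto_stirlingSeq_sqrt_pi
  exact Antitone.le_of_tendsto Stirling.stirlingSeq'_antitone h n

lemma fact_upper (n : ℕ) (hn : 1 ≤ n) :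
    (n.factorial : ℝ) ≤ (Real.exp 1 / Real.sqrt 2) * (Real.sqrt 2 * Real.sqrt n) * ((n:ℝ)/Real.exp 1)^n := by
  have hd : (0:ℝ) < Real.sqrt (2*n) * ((n:ℝ)/Real.exp 1)^n := by
    have : (0:ℝ) < n := by exact_mod_cast hn
    positivity
  have h := stirling_le n hn
  rw [Stirling.stirlingSeq, div_le_iff₀ hd] at h
  calc (n.factorial : ℝ) ≤ Real.exp 1 / Real.sqrt 2 * (Real.sqrt (2*n) * ((n:ℝ)/Real.exp 1)^n) := h
    _ = (Real.exp 1 / Real.sqrt 2) * (Real.sqrt 2 * Real.sqrt n) * ((n:ℝ)/Real.exp 1)^n := by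
        rw [Real.sqrt_mul (by norm_num : (0:ℝ) ≤ 2)]; ring

lemma fact_lower (n : ℕ) :
    Real.sqrt π * (Real.sqrt 2 * Real.sqrt n) * ((n:ℝ)/Real.exp 1)^n ≤ (n.factorial : ℝ) := by
  rcases Nat.eq_zero_or_pos n with rfl | hn
  · simp
  obtain ⟨m, rfl⟩ := Nat.exists_eq_add_of_le' hn
  have h := le_stirling m
  have hd : (0:ℝ) < Real.sqrt (2*(m+1:ℕ)) * (((m+1:ℕ):ℝ)/Real.exp 1)^(m+1) := by
    have : (0:ℝ) < ((m+1:ℕ):ℝ) := by positivity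
    positivity
  rw [Stirling.stirlingSeq, le_div_iff₀ hd] at h
  calc Real.sqrt π * (Real.sqrt 2 * Real.sqrt (m+1:ℕ)) * (((m+1:ℕ):ℝ)/Real.exp 1)^(m+1)
      = Real.sqrt π * (Real.sqrt (2*(m+1:ℕ)) * (((m+1:ℕ):ℝ)/Real.exp 1)^(m+1)) := by
        rw [Real.sqrt_mul (by norm_num : (0:ℝ) ≤ 2)]; ring
    _ ≤ _ := h

lemma lemA (o q : ℕ) (ho : 1 ≤ o) (hq : 1 ≤ q) (p : ℝ) (hp0 : 0 ≤ p) (hp1 : p ≤ 1) :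
    p^o * (1-p)^q ≤ ((o:ℝ)/((o:ℝ)+(q:ℝ)))^o * ((q:ℝ)/((o:ℝ)+(q:ℝ)))^q := by
  have hx : (0:ℝ) < o := by exact_mod_cast ho
  have hy : (0:ℝ) < q := by exact_mod_cast hq
  have hm : (0:ℝ) < (o:ℝ)+(q:ℝ) := by linarith
  set x : ℝ := (o:ℝ)
  set y : ℝ := (q:ℝ)
  set u : ℝ := p*(x+y)/x with hu_def
  set v : ℝ := (1-p)*(x+y)/y with hv_def
  have hu : 0 ≤ u := by positivity
  have hv : 0 ≤ v := by
    have : 0 ≤ 1 - p := by linarith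
    positivity
  have h1 : u^o ≤ Real.exp ((o:ℝ)*(u-1)) := by
    calc u^o ≤ (Real.exp (u-1))^o := by
          apply pow_le_pow_left₀ hu
          linarith [Real.add_one_le_exp (u-1)]
      _ = Real.exp ((o:ℝ)*(u-1)) := by rw [← Real.exp_nat_mul]
  have h2 : v^q ≤ Real.exp ((q:ℝ)*(v-1)) := by
    calc v^q ≤ (Real.exp (v-1))^q := by
          apply pow_le_pow_left₀ hv
          linarith [Real.add_one_le_exp (v-1)]
      _ = Real.exp ((q:ℝ)*(v-1)) := by rw [← Real.exp_nat_mul]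
  have key : u^o * v^q ≤ 1 := by
    calc u^o * v^q ≤ Real.exp ((o:ℝ)*(u-1)) * Real.exp ((q:ℝ)*(v-1)) :=
          mul_le_mul h1 h2 (pow_nonneg hv q) (Real.exp_nonneg _)
      _ = Real.exp ((o:ℝ)*(u-1) + (q:ℝ)*(v-1)) := (Real.exp_add _ _).symm
      _ = 1 := by
          rw [show (o:ℝ)*(u-1) + (q:ℝ)*(v-1) = 0 from by
            rw [hu_def, hv_def]; field_simp; ring, Real.exp_zero]
  have hup : u * (x/(x+y)) = p := by rw [hu_def]; field_simp
  have hvq : v * (y/(x+y)) = 1-p := by rw [hv_def]; field_simp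
  calc p^o * (1-p)^q = (u^o * v^q) * ((x/(x+y))^o * (y/(x+y))^q) := by
        rw [← hvq, ← hup, mul_pow, mul_pow]; ring
    _ ≤ 1 * ((x/(x+y))^o * (y/(x+y))^q) := by
        apply mul_le_mul_of_nonneg_right key (by positivity)
    _ = _ := one_mul _

set_option maxHeartbeats 1000000

lemma exp_cube_le : (Real.exp 1)^3 ≤ 21 := by
  have h1 : Real.exp 1 ≤ 2.72 := le_of_lt (lt_trans Real.exp_one_lt_d9 (by norm_num))
  calc (Real.exp 1)^3 ≤ 2.72^3 := pow_le_pow_left₀ (le_of_lt (Real.exp_pos 1)) h1 3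
    _ ≤ 21 := by norm_num

lemma core (o q : ℕ) (ho : 1 ≤ o) (hq : 1 ≤ q) :
    ((o:ℝ)/((o:ℝ)+(q:ℝ)))^o * ((q:ℝ)/((o:ℝ)+(q:ℝ)))^q *
      ((4:ℝ)^(o+q) * o.factorial * q.factorial * (o+q).factorial)
    ≤ 9 * Real.sqrt (((o:ℝ)+(q:ℝ))+1) * ((2*o).factorial * (2*q).factorial) := by
  set e : ℝ := Real.exp 1 with he_def
  set E : ℝ := e / Real.sqrt 2 with hE_def
  set x : ℝ := (o:ℝ) with hx_def
  set y : ℝ := (q:ℝ) with hy_def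
  have hx : (0:ℝ) < x := by rw [hx_def]; exact_mod_cast ho
  have hy : (0:ℝ) < y := by rw [hy_def]; exact_mod_cast hq
  have hm : (0:ℝ) < x + y := by linarith
  have he : (0:ℝ) < e := Real.exp_pos 1
  have h2 : (0:ℝ) ≤ 2 := by norm_num
  -- factorial bounds
  have hBo : (o.factorial : ℝ) ≤ E * (Real.sqrt 2 * Real.sqrt x) * (x/e)^o := fact_upper o ho
  have hBq : (q.factorial : ℝ) ≤ E * (Real.sqrt 2 * Real.sqrt y) * (y/e)^q := fact_upper q hq
  have hBm : ((o+q).factorial : ℝ) ≤ E * (Real.sqrt 2 * Real.sqrt (x+y)) * ((x+y)/e)^(o+q) := by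
    have := fact_upper (o+q) (by omega)
    push_cast at this ⊢
    convert this using 4 <;> push_cast <;> ring
  have hL2o : Real.sqrt π * (Real.sqrt 2 * Real.sqrt (2*x)) * ((2*x)/e)^(2*o) ≤ ((2*o).factorial : ℝ) := by
    have := fact_lower (2*o)
    push_cast at this
    convert this using 4 <;> push_cast <;> ring
  have hL2q : Real.sqrt π * (Real.sqrt 2 * Real.sqrt (2*y)) * ((2*y)/e)^(2*q) ≤ ((2*q).factorial : ℝ) := by
    have := fact_lower (2*q)
    push_cast at this
    convert this using 4 <;> push_cast <;> ring
  -- step 1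
  have hS : (0:ℝ) ≤ (x/(x+y))^o * (y/(x+y))^q := by positivity
  have step1 : ((o:ℝ)/((o:ℝ)+(q:ℝ)))^o * ((q:ℝ)/((o:ℝ)+(q:ℝ)))^q *
      ((4:ℝ)^(o+q) * o.factorial * q.factorial * (o+q).factorial) ≤
      (x/(x+y))^o * (y/(x+y))^q *
      ((4:ℝ)^(o+q) * (E * (Real.sqrt 2 * Real.sqrt x) * (x/e)^o)
        * (E * (Real.sqrt 2 * Real.sqrt y) * (y/e)^q)
        * (E * (Real.sqrt 2 * Real.sqrt (x+y)) * ((x+y)/e)^(o+q))) := by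
    gcongr
  -- step 2
  have step2 : 9 * Real.sqrt ((x+y)+1) *
      ((Real.sqrt π * (Real.sqrt 2 * Real.sqrt (2*x)) * ((2*x)/e)^(2*o))
        * (Real.sqrt π * (Real.sqrt 2 * Real.sqrt (2*y)) * ((2*y)/e)^(2*q))) ≤
      9 * Real.sqrt (((o:ℝ)+(q:ℝ))+1) * ((2*o).factorial * (2*q).factorial) := by
    gcongr
  refine le_trans step1 (le_trans ?_ step2)
  -- middle inequality
  have hbx : (x/(x+y)) * ((x/e) * ((x+y)/e) * 4) = 4*x^2/e^2 := by
    field_simp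
  have hby : (y/(x+y)) * ((y/e) * ((x+y)/e) * 4) = 4*y^2/e^2 := by
    field_simp
  have hsx : Real.sqrt (2*x) = Real.sqrt 2 * Real.sqrt x := Real.sqrt_mul h2 x
  have hsy : Real.sqrt (2*y) = Real.sqrt 2 * Real.sqrt y := Real.sqrt_mul h2 y
  have hpx : ((2*x)/e)^(2*o) = ((4*x^2/e^2))^o := by
    rw [pow_mul]; congr 1; ring
  have hpy : ((2*y)/e)^(2*q) = ((4*y^2/e^2))^q := by
    rw [pow_mul]; congr 1; ring
  have key_x : (x/(x+y))^o * (x/e)^o * ((x+y)/e)^o * (4:ℝ)^o = (4*x^2/e^2)^o := by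
    rw [← mul_pow, ← mul_pow, ← mul_pow]
    congr 1; field_simp
  have key_y : (y/(x+y))^q * (y/e)^q * ((x+y)/e)^q * (4:ℝ)^q = (4*y^2/e^2)^q := by
    rw [← mul_pow, ← mul_pow, ← mul_pow]
    congr 1; field_simp
  set G : ℝ := Real.sqrt x * Real.sqrt y * (4*x^2/e^2)^o * (4*y^2/e^2)^q with hG_def
  have hG : (0:ℝ) ≤ G := by positivity
  have eL : (x/(x+y))^o * (y/(x+y))^q *
      ((4:ℝ)^(o+q) * (E * (Real.sqrt 2 * Real.sqrt x) * (x/e)^o)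
        * (E * (Real.sqrt 2 * Real.sqrt y) * (y/e)^q)
        * (E * (Real.sqrt 2 * Real.sqrt (x+y)) * ((x+y)/e)^(o+q)))
      = (Real.sqrt 2 * Real.sqrt 2 * Real.sqrt 2 * E^3 * Real.sqrt (x+y)) * G := by
    calc (x/(x+y))^o * (y/(x+y))^q *
      ((4:ℝ)^(o+q) * (E * (Real.sqrt 2 * Real.sqrt x) * (x/e)^o)
        * (E * (Real.sqrt 2 * Real.sqrt y) * (y/e)^q)
        * (E * (Real.sqrt 2 * Real.sqrt (x+y)) * ((x+y)/e)^(o+q)))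
        = ((x/(x+y))^o * (x/e)^o * ((x+y)/e)^o * (4:ℝ)^o)
          * ((y/(x+y))^q * (y/e)^q * ((x+y)/e)^q * (4:ℝ)^q)
          * (Real.sqrt 2 * Real.sqrt 2 * Real.sqrt 2 * E^3 * Real.sqrt x * Real.sqrt y * Real.sqrt (x+y)) := by
          ring
      _ = (4*x^2/e^2)^o * (4*y^2/e^2)^q
          * (Real.sqrt 2 * Real.sqrt 2 * Real.sqrt 2 * E^3 * Real.sqrt x * Real.sqrt y * Real.sqrt (x+y)) := by
          rw [key_x, key_y]
      _ = (Real.sqrt 2 * Real.sqrt 2 * Real.sqrt 2 * E^3 * Real.sqrt (x+y)) * G := by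
          rw [hG_def]; ring
  have eR : 9 * Real.sqrt ((x+y)+1) *
      ((Real.sqrt π * (Real.sqrt 2 * Real.sqrt (2*x)) * ((2*x)/e)^(2*o))
        * (Real.sqrt π * (Real.sqrt 2 * Real.sqrt (2*y)) * ((2*y)/e)^(2*q)))
      = (9 * (Real.sqrt 2 * Real.sqrt 2) * (Real.sqrt 2 * Real.sqrt 2) * (Real.sqrt π * Real.sqrt π)
          * Real.sqrt ((x+y)+1)) * G := by
    rw [hG_def, hsx, hsy, hpx, hpy]; ring
  rw [eL, eR]
  apply mul_le_mul_of_nonneg_right _ hG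
  have s2 : Real.sqrt 2 * Real.sqrt 2 = 2 := Real.mul_self_sqrt h2
  have sπ : Real.sqrt π * Real.sqrt π = π := Real.mul_self_sqrt Real.pi_nonneg
  have h2E : Real.sqrt 2 * E = e := by
    rw [hE_def, mul_div_cancel₀]
    exact Real.sqrt_ne_zero'.mpr (by norm_num)
  have hE3 : Real.sqrt 2 * Real.sqrt 2 * Real.sqrt 2 * E^3 = e^3 := by
    rw [← h2E]; ring
  rw [hE3, s2, sπ]
  have hmono : Real.sqrt (x+y) ≤ Real.sqrt ((x+y)+1) := Real.sqrt_le_sqrt (by linarith)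
  have hsn : (0:ℝ) ≤ Real.sqrt ((x+y)+1) := Real.sqrt_nonneg _
  calc e^3 * Real.sqrt (x+y) ≤ 21 * Real.sqrt ((x+y)+1) := by
        apply mul_le_mul exp_cube_le hmono (Real.sqrt_nonneg _) (by norm_num)
    _ ≤ 9 * 2 * 2 * π * Real.sqrt ((x+y)+1) := by
        have : (21:ℝ) ≤ 9*2*2*π := by linarith [Real.pi_gt_three]
        exact mul_le_mul_of_nonneg_right this hsn

lemma core0 (q : ℕ) (hq : 1 ≤ q) :
    (4:ℝ)^q * q.factorial * q.factorial ≤ 9 * Real.sqrt ((q:ℝ)+1) * ((2*q).factorial : ℝ) := by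
  set e : ℝ := Real.exp 1 with he_def
  set E : ℝ := e / Real.sqrt 2 with hE_def
  set y : ℝ := (q:ℝ) with hy_def
  have hy : (0:ℝ) < y := by rw [hy_def]; exact_mod_cast hq
  have he : (0:ℝ) < e := Real.exp_pos 1
  have hE : (0:ℝ) ≤ E := by positivity
  have hBq : (q.factorial : ℝ) ≤ E * (Real.sqrt 2 * Real.sqrt y) * (y/e)^q := fact_upper q hq
  have hL2q : Real.sqrt π * (Real.sqrt 2 * Real.sqrt (2*y)) * ((2*y)/e)^(2*q) ≤ ((2*q).factorial : ℝ) := by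
    have := fact_lower (2*q)
    push_cast at this
    convert this using 4 <;> push_cast <;> ring
  have step1 : (4:ℝ)^q * q.factorial * q.factorial ≤
      (4:ℝ)^q * (E * (Real.sqrt 2 * Real.sqrt y) * (y/e)^q) * (E * (Real.sqrt 2 * Real.sqrt y) * (y/e)^q) := by
    gcongr
  have step2 : 9 * Real.sqrt (y+1) *
      (Real.sqrt π * (Real.sqrt 2 * Real.sqrt (2*y)) * ((2*y)/e)^(2*q)) ≤
      9 * Real.sqrt ((q:ℝ)+1) * ((2*q).factorial : ℝ) := by
    gcongr
  refine le_trans step1 (le_trans ?_ step2)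
  have key : (4:ℝ)^q * (y/e)^q * (y/e)^q = (4*y^2/e^2)^q := by
    rw [← mul_pow, ← mul_pow]; congr 1; ring
  have hsy : Real.sqrt (2*y) = Real.sqrt 2 * Real.sqrt y := Real.sqrt_mul (by norm_num) y
  have hpy : ((2*y)/e)^(2*q) = ((4*y^2/e^2))^q := by
    rw [pow_mul]; congr 1; ring
  have eL : (4:ℝ)^q * (E * (Real.sqrt 2 * Real.sqrt y) * (y/e)^q) * (E * (Real.sqrt 2 * Real.sqrt y) * (y/e)^q)
      = (E*E*(Real.sqrt 2*Real.sqrt 2)*(Real.sqrt y*Real.sqrt y)) * ((4*y^2/e^2)^q) := by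
    rw [← key]; ring
  have eR : 9 * Real.sqrt (y+1) *
      (Real.sqrt π * (Real.sqrt 2 * Real.sqrt (2*y)) * ((2*y)/e)^(2*q))
      = (9 * Real.sqrt (y+1) * Real.sqrt π * (Real.sqrt 2*Real.sqrt 2) * Real.sqrt y) * ((4*y^2/e^2)^q) := by
    rw [hsy, hpy]; ring
  rw [eL, eR]
  apply mul_le_mul_of_nonneg_right _ (by positivity)
  have s2 : Real.sqrt 2 * Real.sqrt 2 = 2 := Real.mul_self_sqrt (by norm_num)
  have sy2 : Real.sqrt y * Real.sqrt y = y := Real.mul_self_sqrt hy.le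
  have hE2 : E*E ≤ 4 := by
    have h1 : Real.exp 1 ≤ 2.72 := le_of_lt (lt_trans Real.exp_one_lt_d9 (by norm_num))
    have : E*E = e*e/2 := by
      rw [hE_def]; rw [div_mul_div_comm, s2]
    rw [this]
    nlinarith [Real.exp_pos 1]
  have hπ1 : (1:ℝ) ≤ Real.sqrt π := by
    rw [show (1:ℝ) = Real.sqrt 1 from (Real.sqrt_one).symm]
    exact Real.sqrt_le_sqrt (by nlinarith [Real.pi_gt_three])
  have hmono : Real.sqrt y ≤ Real.sqrt (y+1) := Real.sqrt_le_sqrt (by linarith)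
  have hsy0 : (0:ℝ) ≤ Real.sqrt y := Real.sqrt_nonneg y
  have hsy10 : (0:ℝ) ≤ Real.sqrt (y+1) := Real.sqrt_nonneg _
  rw [s2, sy2]
  calc E*E*2*y ≤ 4*2*(Real.sqrt y * Real.sqrt (y+1)) := by nlinarith
    _ ≤ 9 * Real.sqrt π * 2 * (Real.sqrt y * Real.sqrt (y+1)) := by
        nlinarith [mul_nonneg hsy0 hsy10, hπ1]
    _ = 9 * Real.sqrt (y+1) * Real.sqrt π * 2 * Real.sqrt y := by ring

lemma edge (q : ℕ) (hq : 1 ≤ q) (t : ℝ) (ht0 : 0 ≤ t) (ht1 : t ≤ 1) :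
    t * ((4:ℝ)^q * q.factorial * q.factorial) ≤ 9 * Real.sqrt ((q:ℝ)+1) * ((2*q).factorial : ℝ) :=
  calc t * ((4:ℝ)^q * q.factorial * q.factorial)
      ≤ 1 * ((4:ℝ)^q * q.factorial * q.factorial) :=
        mul_le_mul_of_nonneg_right ht1 (by positivity)
    _ = (4:ℝ)^q * q.factorial * q.factorial := one_mul _
    _ ≤ _ := core0 q hq

lemma L1 (o m : ℕ) (hom : o ≤ m) (p : ℝ) (hp0 : 0 ≤ p) (hp1 : p ≤ 1) :
    p^o * (1-p)^(m-o) ≤ 9 * Real.sqrt ((m:ℝ)+1) *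
      (Real.Gamma ((o:ℝ)+1/2) * Real.Gamma ((m:ℝ)-(o:ℝ)+1/2) / Real.Gamma ((m:ℝ)+1) / π) := by
  obtain ⟨q, rfl⟩ : ∃ q, m = o + q := ⟨m - o, by omega⟩
  have hq_eq : (o + q) - o = q := by omega
  rw [hq_eq]
  have hcast : ((o+q : ℕ):ℝ) - (o:ℝ) = (q:ℝ) := by push_cast; ring
  rw [hcast, myGamma_nat_add_half o, myGamma_nat_add_half q, Real.Gamma_nat_eq_factorial (o+q)]
  have hflip : Real.sqrt π * ((2*o).factorial:ℝ)/(4^o*(o.factorial:ℝ)) *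
        (Real.sqrt π * ((2*q).factorial:ℝ)/(4^q*(q.factorial:ℝ))) / ((o+q).factorial:ℝ) / π
      = (((2*o).factorial:ℝ) * ((2*q).factorial:ℝ)) /
        ((4:ℝ)^(o+q) * (o.factorial:ℝ) * (q.factorial:ℝ) * ((o+q).factorial:ℝ)) := by
    set s : ℝ := Real.sqrt π with hs_def
    have hs : s^2 = π := Real.sq_sqrt Real.pi_nonneg
    have hs0 : s ≠ 0 := by
      rw [hs_def]; positivity
    have ho4 : ((o.factorial:ℝ)) ≠ 0 := by positivity
    have hq4 : ((q.factorial:ℝ)) ≠ 0 := by positivity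
    have hm : (((o+q).factorial : ℝ)) ≠ 0 := by positivity
    rw [← hs, pow_add]
    field_simp
  rw [hflip, mul_div_assoc']
  rw [le_div_iff₀ (by positivity)]
  rcases Nat.eq_zero_or_pos o with rfl | ho <;> rcases Nat.eq_zero_or_pos q with rfl | hq
  · norm_num
  · have hedge := edge q hq ((1-p)^q) (pow_nonneg (by linarith) q)
      (pow_le_one₀ (by linarith) (by linarith))
    refine le_of_eq_of_le ?_ (le_of_le_of_eq hedge ?_)
    · push_cast [Nat.zero_add, Nat.factorial_zero]; ring
    · push_cast [Nat.zero_add, Nat.mul_zero, Nat.factorial_zero]; ring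
  · have hedge := edge o ho (p^o) (pow_nonneg hp0 o) (pow_le_one₀ hp0 hp1)
    refine le_of_eq_of_le ?_ (le_of_le_of_eq hedge ?_)
    · push_cast [Nat.add_zero, Nat.factorial_zero]; ring
    · push_cast [Nat.add_zero, Nat.mul_zero, Nat.factorial_zero]; ring
  · have hA := lemA o q ho hq p hp0 hp1
    have hD : (0:ℝ) ≤ (4:ℝ)^(o+q) * (o.factorial:ℝ) * (q.factorial:ℝ) * ((o+q).factorial:ℝ) := by positivity
    calc p^o * (1-p)^q * ((4:ℝ)^(o+q) * (o.factorial:ℝ) * (q.factorial:ℝ) * ((o+q).factorial:ℝ))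
        ≤ (((o:ℝ)/((o:ℝ)+(q:ℝ)))^o * ((q:ℝ)/((o:ℝ)+(q:ℝ)))^q) *
          ((4:ℝ)^(o+q) * (o.factorial:ℝ) * (q.factorial:ℝ) * ((o+q).factorial:ℝ)) :=
          mul_le_mul_of_nonneg_right hA hD
      _ ≤ 9 * Real.sqrt (((o:ℝ)+(q:ℝ))+1) * (((2*o).factorial:ℝ) * ((2*q).factorial:ℝ)) := core o q ho hq
      _ = 9 * Real.sqrt (((o+q:ℕ):ℝ)+1) * (((2*o).factorial:ℝ) * ((2*q).factorial:ℝ)) := by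
          push_cast; ring

lemma two_mul_card_filter_le (k : ℕ) :
    2 * ((Finset.univ.filter (fun ab : Fin k × Fin k => ab.1 ≤ ab.2)).card) = k * k + k := by
  classical
  set A := Finset.univ.filter (fun ab : Fin k × Fin k => ab.1 ≤ ab.2) with hA
  set B := Finset.univ.filter (fun ab : Fin k × Fin k => ab.2 ≤ ab.1) with hB
  have hBA : B = A.image Prod.swap := by
    ext p
    simp only [hA, hB, Finset.mem_filter, Finset.mem_image, Finset.mem_univ, true_and]
    constructor
    · intro h; exact ⟨p.swap, h, p.swap_swap⟩
    · rintro ⟨q, hq, rfl⟩; exact hq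
  have hcardB : B.card = A.card := by
    rw [hBA]; exact Finset.card_image_of_injective _ Prod.swap_injective
  have hunion : A ∪ B = Finset.univ := by
    ext p
    simp only [hA, hB, Finset.mem_union, Finset.mem_filter, Finset.mem_univ, true_and, iff_true]
    exact le_total p.1 p.2
  have hinter : A ∩ B = (Finset.univ : Finset (Fin k)).image (fun a => (a, a)) := by
    ext p
    simp only [hA, hB, Finset.mem_inter, Finset.mem_filter, Finset.mem_univ, true_and,
      Finset.mem_image]
    constructor
    · rintro ⟨h1, h2⟩
      refine ⟨p.1, ?_⟩
      have : p.1 = p.2 := le_antisymm h1 h2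
      obtain ⟨a, b⟩ := p
      simp only at this
      rw [this]
    · rintro ⟨a, rfl⟩; exact ⟨le_refl _, le_refl _⟩
  have hintercard : (A ∩ B).card = k := by
    rw [hinter, Finset.card_image_of_injective _ (fun a b h => ((Prod.mk.injEq _ _ _ _).mp h).1)]
    simp
  have h := Finset.card_union_add_card_inter A B
  rw [hunion, hintercard, hcardB] at h
  have : (Finset.univ : Finset (Fin k × Fin k)).card = k * k := by
    simp [Finset.card_univ]
  omega


end SBMProofAux

set_option maxHeartbeats 1000000 in
open Real in
/-- For every `k ≥ 1` there is a constant `c_k` depending only on `k` such that for every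
`n ≥ 2`, every graph `x` on `n` vertices and every `z ∈ [k]^n`:
`log( sup_P P(x|z) / Q(x|z) ) ≤ (k(k+1)/2) log n + c_k`. -/
theorem log_ratio_supLik_Q_le (k : ℕ) (hk : 1 ≤ k) :
    ∃ c : ℝ, ∀ n : ℕ, 2 ≤ n → ∀ z : Fin n → Fin k,
      ∀ x : {p : Fin n × Fin n // p.1 < p.2} → Bool,
        Real.log (supLikSBM n k z x / QSBM n k z x) ≤
          ((k : ℝ) * (k + 1) / 2) * Real.log n + c := by
  classical
  refine ⟨((k:ℝ) * (k+1) / 2) * Real.log (9 * Real.sqrt 2), ?_⟩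
  intro n hn z x
  set F := Finset.univ.filter (fun ab : Fin k × Fin k => ab.1 ≤ ab.2) with hF
  set T := F.card with hT
  have h2T : 2 * T = k * k + k := two_mul_card_filter_le k
  have hTreal : (T:ℝ) = (k:ℝ) * (k+1) / 2 := by
    have : (2*T : ℕ) = (k*k+k : ℕ) := h2T
    have h' : (2:ℝ) * T = (k:ℝ)*k + k := by exact_mod_cast this
    linarith
  -- abbreviations
  set m : Fin k × Fin k → ℕ := nabSBM n k z with hm
  set o : Fin k × Fin k → ℕ := oabSBM n k z x with ho
  have hom : ∀ ab, o ab ≤ m ab := by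
    intro ab
    apply Finset.card_le_card
    intro p hp
    simp only [Finset.mem_filter] at hp ⊢
    exact ⟨hp.1, hp.2.1⟩
  -- Q rewriting
  set t : Fin k × Fin k → ℝ := fun ab =>
    Real.Gamma ((o ab : ℝ) + 1/2) * Real.Gamma ((m ab : ℝ) - (o ab : ℝ) + 1/2) /
      Real.Gamma ((m ab : ℝ) + 1) with ht
  have htpos : ∀ ab, 0 < t ab := by
    intro ab
    have h1 : (0:ℝ) < Real.Gamma ((o ab : ℝ) + 1/2) :=
      Real.Gamma_pos_of_pos (by positivity)
    have hc : (0:ℝ) ≤ (m ab : ℝ) - (o ab : ℝ) := by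
      have := hom ab; have : (o ab : ℝ) ≤ (m ab : ℝ) := by exact_mod_cast this
      linarith
    have h2 : (0:ℝ) < Real.Gamma ((m ab : ℝ) - (o ab : ℝ) + 1/2) :=
      Real.Gamma_pos_of_pos (by linarith)
    have h3 : (0:ℝ) < Real.Gamma ((m ab : ℝ) + 1) :=
      Real.Gamma_pos_of_pos (by positivity)
    positivity
  have hQ : QSBM n k z x = ∏ ab ∈ F, (t ab / π) := by
    have hpow : Real.Gamma (1/2:ℝ) ^ (k*(k+1)) = π ^ T := by
      rw [show k * (k+1) = 2 * T from by rw [h2T]; ring, pow_mul, Real.Gamma_one_half_eq,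
        Real.sq_sqrt Real.pi_nonneg]
    rw [QSBM, hpow, show (π:ℝ) ^ T = ∏ _ab ∈ F, π from (Finset.prod_const π).symm,
      ← Finset.prod_div_distrib]
  have hQpos : 0 < QSBM n k z x := by
    rw [hQ]
    exact Finset.prod_pos (fun ab _ => div_pos (htpos ab) Real.pi_pos)
  -- nonempty index
  haveI : Nonempty {P : Fin k → Fin k → ℝ //
      (∀ a b, P a b ∈ Set.Icc (0 : ℝ) 1) ∧ (∀ a b, P a b = P b a)} :=
    ⟨⟨fun _ _ => 1/2, ⟨fun a b => by constructor <;> norm_num, fun a b => rfl⟩⟩⟩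
  -- sup bound
  have hsup : supLikSBM n k z x ≤ ∏ ab ∈ F, (9 * Real.sqrt ((m ab : ℝ) + 1) * (t ab / π)) := by
    rw [supLikSBM]
    apply ciSup_le
    intro P
    apply Finset.prod_le_prod
    · intro ab _
      have h0 := (P.2.1 ab.1 ab.2).1
      have h1 := (P.2.1 ab.1 ab.2).2
      have : (0:ℝ) ≤ 1 - P.1 ab.1 ab.2 := by linarith
      positivity
    · intro ab _
      have h0 := (P.2.1 ab.1 ab.2).1
      have h1 := (P.2.1 ab.1 ab.2).2
      have := L1 (o ab) (m ab) (hom ab) (P.1 ab.1 ab.2) h0 h1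
      calc (P.1 ab.1 ab.2) ^ (o ab) * (1 - P.1 ab.1 ab.2) ^ (m ab - o ab)
          ≤ 9 * Real.sqrt ((m ab : ℝ)+1) *
            (Real.Gamma ((o ab : ℝ)+1/2) * Real.Gamma ((m ab : ℝ)-(o ab : ℝ)+1/2) /
              Real.Gamma ((m ab : ℝ)+1) / π) := this
        _ = 9 * Real.sqrt ((m ab : ℝ) + 1) * (t ab / π) := by rw [ht]
  -- sup positivity
  have hbdd : BddAbove (Set.range (fun P : {P : Fin k → Fin k → ℝ //
      (∀ a b, P a b ∈ Set.Icc (0 : ℝ) 1) ∧ (∀ a b, P a b = P b a)} =>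
      ∏ ab ∈ F, (P.1 ab.1 ab.2) ^ (o ab) * (1 - P.1 ab.1 ab.2) ^ (m ab - o ab))) := by
    refine ⟨1, ?_⟩
    rintro v ⟨P, rfl⟩
    apply Finset.prod_le_one
    · intro ab _
      have h0 := (P.2.1 ab.1 ab.2).1
      have h1 := (P.2.1 ab.1 ab.2).2
      have : (0:ℝ) ≤ 1 - P.1 ab.1 ab.2 := by linarith
      positivity
    · intro ab _
      have h0 := (P.2.1 ab.1 ab.2).1
      have h1 := (P.2.1 ab.1 ab.2).2
      exact mul_le_one₀ (pow_le_one₀ h0 h1) (pow_nonneg (by linarith) _)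
        (pow_le_one₀ (by linarith) (by linarith))
  have hsup_pos : 0 < supLikSBM n k z x := by
    have hval : (0:ℝ) < ∏ ab ∈ F, ((1/2:ℝ)) ^ (o ab) * (1 - (1/2:ℝ)) ^ (m ab - o ab) := by
      apply Finset.prod_pos
      intro ab _
      positivity
    calc (0:ℝ) < ∏ ab ∈ F, ((1/2:ℝ)) ^ (o ab) * (1 - (1/2:ℝ)) ^ (m ab - o ab) := hval
      _ ≤ supLikSBM n k z x := by
          rw [supLikSBM]
          exact le_ciSup hbdd ⟨fun _ _ => 1/2, ⟨fun a b => by constructor <;> norm_num,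
            fun a b => rfl⟩⟩
  -- m bound
  have hmn : ∀ ab, (m ab : ℝ) + 1 ≤ 2 * (n:ℝ)^2 := by
    intro ab
    have h1 : m ab ≤ Fintype.card {p : Fin n × Fin n // p.1 < p.2} := by
      rw [hm, nabSBM, ← Finset.card_univ]
      exact Finset.card_filter_le _ _
    have h2 : Fintype.card {p : Fin n × Fin n // p.1 < p.2} ≤ n * n := by
      calc Fintype.card {p : Fin n × Fin n // p.1 < p.2}
          ≤ Fintype.card (Fin n × Fin n) := Fintype.card_subtype_le _
        _ = n * n := by simp
    have h3 : m ab ≤ n * n := le_trans h1 h2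
    have h4 : (m ab : ℝ) ≤ (n:ℝ) * n := by exact_mod_cast h3
    have h5 : (1:ℝ) ≤ (n:ℝ)^2 := by
      have : (1:ℝ) ≤ (n:ℝ) := by exact_mod_cast (by omega : 1 ≤ n)
      nlinarith
    nlinarith
  -- ratio bound
  have hratio : supLikSBM n k z x / QSBM n k z x ≤ (9 * (Real.sqrt 2 * (n:ℝ)))^T := by
    rw [div_le_iff₀ hQpos, hQ]
    refine le_trans hsup ?_
    have : ∀ ab ∈ F, 9 * Real.sqrt ((m ab : ℝ) + 1) * (t ab / π) ≤
        (9 * (Real.sqrt 2 * (n:ℝ))) * (t ab / π) := by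
      intro ab _
      apply mul_le_mul_of_nonneg_right _ (le_of_lt (div_pos (htpos ab) Real.pi_pos))
      have : Real.sqrt ((m ab : ℝ) + 1) ≤ Real.sqrt 2 * (n:ℝ) := by
        calc Real.sqrt ((m ab : ℝ) + 1) ≤ Real.sqrt (2 * (n:ℝ)^2) := Real.sqrt_le_sqrt (hmn ab)
          _ = Real.sqrt 2 * Real.sqrt ((n:ℝ)^2) := Real.sqrt_mul (by norm_num) _
          _ = Real.sqrt 2 * (n:ℝ) := by rw [Real.sqrt_sq (by positivity)]
      linarith
    calc ∏ ab ∈ F, (9 * Real.sqrt ((m ab : ℝ) + 1) * (t ab / π))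
        ≤ ∏ ab ∈ F, ((9 * (Real.sqrt 2 * (n:ℝ))) * (t ab / π)) := by
          apply Finset.prod_le_prod
          · intro ab _
            have := htpos ab
            positivity
          · exact this
      _ = (9 * (Real.sqrt 2 * (n:ℝ)))^T * ∏ ab ∈ F, (t ab / π) := by
          rw [Finset.prod_mul_distrib, Finset.prod_const]
  -- take logs
  have hn1 : (1:ℝ) ≤ (n:ℝ) := by exact_mod_cast (by omega : 1 ≤ n)
  have hbase_pos : (0:ℝ) < 9 * (Real.sqrt 2 * (n:ℝ)) := by positivity
  have hlog := Real.log_le_log (div_pos hsup_pos hQpos) hratio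
  rw [Real.log_pow] at hlog
  have hsplit : Real.log (9 * (Real.sqrt 2 * (n:ℝ))) = Real.log (9 * Real.sqrt 2) + Real.log n := by
    rw [show 9 * (Real.sqrt 2 * (n:ℝ)) = (9 * Real.sqrt 2) * (n:ℝ) from by ring]
    rw [Real.log_mul (by positivity) (by positivity)]
  rw [hsplit] at hlog
  have hTlog : (T:ℝ) * (Real.log (9 * Real.sqrt 2) + Real.log n)
      = ((k:ℝ) * (k+1) / 2) * Real.log n + ((k:ℝ) * (k+1) / 2) * Real.log (9 * Real.sqrt 2) := by
    rw [hTreal]; ring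
  calc Real.log (supLikSBM n k z x / QSBM n k z x) ≤
      (T:ℝ) * (Real.log (9 * Real.sqrt 2) + Real.log n) := hlog
    _ = _ := hTlog
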